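/- Let n = 2m be even and let q be an integer with 1 ≤ q ≤ m. Then 2 · D_B(n−1, q) ≤ D(n, q), where D_B(n−1,q) is the number of words x ∈ {0,1}^{n−1} with T_B(x,q) = ∅ and T_B(x̄,q) = ∅, and D(n,q) is the number of words x ∈ {0,1}^n with T(x,q) = ∅ and T(x̄,q) = ∅. In particular, for fixed q, D_B(n−1,q)/2^{n−1} → 0 as n → ∞ along even integers. -/

import Mathlib

/-- The Hamming weight of a binary word `x ∈ {0,1}^N`: the number of ones. -/
def wt {N : ℕ} (x : Fin N → Bool) : ℕ :=
  (Finset.univ.filter (fun i => x i = true)).card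

/-- `Flip x j` complements the first `j` bits of `x`. -/
def Flip {N : ℕ} (x : Fin N → Bool) (j : ℕ) : Fin N → Bool :=
  fun i => if (i : ℕ) < j then !(x i) else x i

/-- `x ∈ {0,1}^{2m}` is bad (for Scheme A) if `T(x,q) = ∅` and `T(x̄,q) = ∅`. -/
def Bad (m q : ℕ) (x : Fin (2*m) → Bool) : Prop :=
  (∀ j ≤ 2*m, wt (Flip x j) ≠ m + q) ∧
  (∀ j ≤ 2*m, wt (Flip (fun i => !(x i)) j) ≠ m + q)

/-- `D m q` is the number of bad words in `{0,1}^{2m}`. -/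
noncomputable def D (m q : ℕ) : ℕ := Nat.card {x : Fin (2*m) → Bool // Bad m q x}

/-- `x ∈ {0,1}^{2m−1}` is bad (for Scheme B) if `T_B(x,q) = ∅` and `T_B(x̄,q) = ∅`. -/
def BadB (m q : ℕ) (x : Fin (2*m-1) → Bool) : Prop :=
  (∀ j ≤ 2*m - 1, ¬(wt (Flip x j) = m + q - 1 ∨ wt (Flip x j) = m + q)) ∧
  (∀ j ≤ 2*m - 1, ¬(wt (Flip (fun i => !(x i)) j) = m + q - 1 ∨
      wt (Flip (fun i => !(x i)) j) = m + q))

/-- `DB m q` is the number of bad words in `{0,1}^{2m−1}` for Scheme B. -/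
noncomputable def DB (m q : ℕ) : ℕ := Nat.card {x : Fin (2*m-1) → Bool // BadB m q x}

/-!
Appending a bit to a word changes the weight of each prefix flip by at most one, and the full
flip of the longer word has the weight of `x̄` plus at most one. Hence if `x` and `x̄` avoid both
levels `m + q - 1` and `m + q`, both one-bit extensions of `x` are bad words of length `2m`,
which gives an injection of `Bool × {bad words of length 2m - 1}` into the bad words of length `2m`.

For the limit, `j ↦ wt (Flip x j)` is a walk with unit steps whose endpoints `wt x` and
`2m - wt x` straddle `m`. Since `wt (Flip x̄ j) = 2m - wt (Flip x j)`, the walk of a bad word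
avoids `m ± q`, so it stays strictly inside `(m - q, m + q)`. Flipping a run of `2q` zeros would
raise it by `2q`; so every aligned block of length `2q` of a bad word contains a one, and bad
words make up at most a fraction `(1 - 2^(-2q))^⌊m/q⌋` of all words.
-/

section Walk

open Set

variable {f : ℕ → ℤ}

theorem exists_mem_Icc_eq_of_succ_le (hf : ∀ i, f (i + 1) ≤ f i + 1) {a b : ℕ} (hab : a ≤ b)
    {c : ℤ} (ha : f a ≤ c) (hb : c ≤ f b) : ∃ j ∈ Icc a b, f j = c := by
  induction b, hab using Nat.le_induction with
  | base => exact ⟨a, left_mem_Icc.2 le_rfl, le_antisymm ha hb⟩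
  | succ b hab ih =>
    rcases le_or_gt c (f b) with hc | hc
    · obtain ⟨j, hj, rfl⟩ := ih hc
      exact ⟨j, ⟨hj.1, hj.2.trans b.le_succ⟩, rfl⟩
    · exact ⟨b + 1, ⟨hab.trans b.le_succ, le_rfl⟩, by linarith [hf b]⟩

theorem exists_mem_uIcc_eq_of_abs_sub_le_one (hf : ∀ i, |f (i + 1) - f i| ≤ 1) {a b : ℕ}
    {c : ℤ} (hc : c ∈ uIcc (f a) (f b)) : ∃ j ∈ uIcc a b, f j = c := by
  wlog hab : a ≤ b generalizing a b
  · obtain ⟨j, hj, hfj⟩ := this (uIcc_comm (f a) _ ▸ hc) (le_of_not_ge hab)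
    exact ⟨j, uIcc_comm a b ▸ hj, hfj⟩
  rw [uIcc_of_le hab]
  rcases le_total (f a) (f b) with h | h
  · rw [uIcc_of_le h] at hc
    exact exists_mem_Icc_eq_of_succ_le (fun i => by linarith [(abs_le.1 (hf i)).2]) hab hc.1 hc.2
  · rw [uIcc_of_ge h] at hc
    obtain ⟨j, hj, hfj⟩ := exists_mem_Icc_eq_of_succ_le (f := fun i => -f i)
      (fun i => by linarith [(abs_le.1 (hf i)).1]) hab (neg_le_neg hc.2) (neg_le_neg hc.1)
    exact ⟨j, hj, neg_inj.1 hfj⟩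

theorem abs_sub_lt_of_forall_ne (hf : ∀ i, |f (i + 1) - f i| ≤ 1) {N : ℕ} {c d : ℤ}
    (hd : 0 ≤ d) (hc : c ∈ uIcc (f 0) (f N)) (hlo : ∀ j ≤ N, f j ≠ c - d)
    (hhi : ∀ j ≤ N, f j ≠ c + d) : ∀ j ≤ N, |f j - c| < d := by
  have hvisit : ∀ j ≤ N, ∀ k ≤ N, ∀ v ∈ uIcc (f k) (f j), ∃ i ≤ N, f i = v := by
    intro j hj k hk v hv
    obtain ⟨i, hi, rfl⟩ := exists_mem_uIcc_eq_of_abs_sub_le_one hf hv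
    exact ⟨i, hi.2.trans (max_le hk hj), rfl⟩
  obtain ⟨k₁, hk₁, hbelow, k₂, hk₂, habove⟩ : ∃ k₁ ≤ N, f k₁ ≤ c ∧ ∃ k₂ ≤ N, c ≤ f k₂ := by
    rcases mem_uIcc.1 hc with ⟨h0, hN⟩ | ⟨hN, h0⟩
    exacts [⟨0, N.zero_le, h0, N, le_rfl, hN⟩, ⟨N, le_rfl, hN, 0, N.zero_le, h0⟩]
  intro j hj
  by_contra! hjc
  rcases le_abs'.1 hjc with hlow | hhigh
  · obtain ⟨i, hi, hfi⟩ :=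
      hvisit j hj k₂ hk₂ (c - d) (mem_uIcc.2 (.inr ⟨by linarith, by linarith⟩))
    exact hlo i hi hfi
  · obtain ⟨i, hi, hfi⟩ :=
      hvisit j hj k₁ hk₁ (c + d) (mem_uIcc.2 (.inl ⟨by linarith, by linarith⟩))
    exact hhi i hi hfi

end Walk

section Words

variable {N : ℕ}

theorem wt_eq_sum (x : Fin N → Bool) : wt x = ∑ i, (x i).toNat := by
  rw [wt, Finset.card_filter]
  exact Finset.sum_congr rfl fun i _ => by cases x i <;> rfl

theorem wt_add_wt_not (x : Fin N → Bool) : wt x + wt (fun i => !x i) = N := by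
  simpa [wt] using Finset.card_filter_add_card_filter_not (s := Finset.univ) (fun i => x i = true)

theorem flip_zero (x : Fin N → Bool) : Flip x 0 = x := by
  funext i; simp [Flip]

theorem flip_of_le (x : Fin N → Bool) {j : ℕ} (hj : N ≤ j) : Flip x j = fun i => !x i := by
  funext i; simp [Flip, i.isLt.trans_le hj]

theorem flip_not (x : Fin N → Bool) (j : ℕ) :
    Flip (fun i => !x i) j = fun i => !Flip x j i := by
  funext i; simp only [Flip]; split_ifs <;> rfl

theorem wt_flip_add_wt_flip_not (x : Fin N → Bool) (j : ℕ) :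
    wt (Flip x j) + wt (Flip (fun i => !x i) j) = N := by
  rw [flip_not]; exact wt_add_wt_not _

theorem wt_flip_succ (x : Fin N → Bool) {j : ℕ} (hj : j < N) :
    (wt (Flip x (j + 1)) : ℤ) = wt (Flip x j) + if x ⟨j, hj⟩ then -1 else 1 := by
  have hterm : ∀ i, ((Flip x (j + 1) i).toNat : ℤ) =
      (Flip x j i).toNat + if i = ⟨j, hj⟩ then (if x ⟨j, hj⟩ then -1 else 1) else 0 := by
    intro i
    rcases lt_trichotomy (i : ℕ) j with h | h | h
    · simp [Flip, h, h.trans j.lt_succ_self, Fin.ne_of_lt (show i < ⟨j, hj⟩ from h)]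
    · obtain rfl : i = ⟨j, hj⟩ := Fin.ext h
      cases hxj : x ⟨j, hj⟩ <;> simp [Flip, hxj]
    · simp [Flip, h.not_gt, (Nat.succ_le_of_lt h).not_gt,
        (Fin.ne_of_lt (show ⟨j, hj⟩ < i from h)).symm]
  simp only [wt_eq_sum, Nat.cast_sum, hterm, Finset.sum_add_distrib, Finset.sum_ite_eq',
    Finset.mem_univ, if_true]

theorem abs_wt_flip_succ_sub_le (x : Fin N → Bool) (j : ℕ) :
    |(wt (Flip x (j + 1)) : ℤ) - wt (Flip x j)| ≤ 1 := by
  rcases lt_or_ge j N with hj | hj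
  · rw [wt_flip_succ x hj]; split_ifs <;> simp
  · rw [flip_of_le x hj, flip_of_le x (hj.trans j.le_succ)]; simp

theorem wt_flip_add_of_forall_false (x : Fin N → Bool) {s L : ℕ} (hsL : s + L ≤ N)
    (hx : ∀ i : Fin N, s ≤ i → i < s + L → x i = false) :
    wt (Flip x (s + L)) = wt (Flip x s) + L := by
  induction L with
  | zero => rfl
  | succ L ih =>
    have hlt : s + L < N := by omega
    have hstep := wt_flip_succ x hlt
    rw [hx ⟨s + L, hlt⟩ (by simp) (by simp), if_neg Bool.false_ne_true] at hstep
    rw [← add_assoc]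
    have := ih (by omega) fun i h1 h2 => hx i h1 (by omega)
    omega

theorem flip_snoc (x : Fin N → Bool) (b : Bool) {j : ℕ} (hj : j ≤ N) :
    Flip (Fin.snoc x b : Fin (N + 1) → Bool) j = Fin.snoc (Flip x j) b := by
  funext i
  refine Fin.lastCases ?_ (fun k => ?_) i
  · simp [Flip, hj.not_gt]
  · simp [Flip]

theorem not_snoc (x : Fin N → Bool) (b : Bool) :
    (fun i => !(Fin.snoc x b : Fin (N + 1) → Bool) i) = Fin.snoc (fun i => !x i) !b := by
  funext i
  refine Fin.lastCases ?_ (fun k => ?_) i <;> simp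

theorem wt_snoc (x : Fin N → Bool) (b : Bool) :
    wt (Fin.snoc x b : Fin (N + 1) → Bool) = wt x + b.toNat := by
  simp [wt_eq_sum, Fin.sum_univ_castSucc]

end Words

/-- `T(x, q) = ∅` is `AvoidsWt x (m + q)`. -/
def AvoidsWt {N : ℕ} (x : Fin N → Bool) (c : ℕ) : Prop :=
  ∀ j ≤ N, wt (Flip x j) ≠ c

theorem bad_iff {m q : ℕ} (x : Fin (2 * m) → Bool) :
    Bad m q x ↔ AvoidsWt x (m + q) ∧ AvoidsWt (fun i => !x i) (m + q) :=
  Iff.rfl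

theorem badB_iff {m q : ℕ} (x : Fin (2 * m - 1) → Bool) :
    BadB m q x ↔ (AvoidsWt x (m + q - 1) ∧ AvoidsWt x (m + q)) ∧
      (AvoidsWt (fun i => !x i) (m + q - 1) ∧ AvoidsWt (fun i => !x i) (m + q)) := by
  simp only [BadB, AvoidsWt, not_or, ← ne_eq, forall_and]

theorem AvoidsWt.snoc {N c : ℕ} {x : Fin N → Bool} (hpred : AvoidsWt x (c - 1))
    (hc : AvoidsWt x c) (hnot : AvoidsWt (fun i => !x i) (c - 1))
    (hnot' : AvoidsWt (fun i => !x i) c) (b : Bool) :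
    AvoidsWt (Fin.snoc x b : Fin (N + 1) → Bool) c := by
  intro j hj
  rcases hj.lt_or_eq with hj | rfl
  · rw [flip_snoc x b (Nat.lt_succ_iff.1 hj), wt_snoc]
    have := hpred j (Nat.lt_succ_iff.1 hj)
    have := hc j (Nat.lt_succ_iff.1 hj)
    cases b <;> simp <;> omega
  · have h₀ := hnot 0 N.zero_le
    have h₁ := hnot' 0 N.zero_le
    rw [flip_zero] at h₀ h₁
    rw [flip_of_le _ le_rfl, not_snoc, wt_snoc]
    cases b <;> simp <;> omega

theorem two_mul_card_le_card_snoc {N : ℕ} {P : (Fin N → Bool) → Prop}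
    {Q : (Fin (N + 1) → Bool) → Prop} (hPQ : ∀ x, P x → ∀ b, Q (Fin.snoc x b)) :
    2 * Nat.card {x // P x} ≤ Nat.card {y // Q y} := by
  let F : Bool × {x // P x} → {y // Q y} := fun p => ⟨Fin.snoc p.2.1 p.1, hPQ _ p.2.2 p.1⟩
  have hF : Function.Injective F := by
    rintro ⟨b, x, hx⟩ ⟨b', x', hx'⟩ h
    obtain ⟨rfl, rfl⟩ := Fin.snoc_injective2 (α := fun _ => Bool) (congrArg Subtype.val h)
    rfl
  simpa [Nat.card_prod] using Nat.card_le_card_of_injective F hF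

theorem two_mul_DB_le_D {m q : ℕ} (hq : 1 ≤ q) (hm : q ≤ m) : 2 * DB m q ≤ D m q := by
  obtain ⟨N, hN⟩ : ∃ N, 2 * m = N + 1 := ⟨2 * m - 1, by omega⟩
  have hN' : 2 * m - 1 = N := by omega
  rw [DB, D, Nat.card_congr (Equiv.subtypeEquivRight badB_iff),
    Nat.card_congr (Equiv.subtypeEquivRight bad_iff), hN', hN]
  refine two_mul_card_le_card_snoc fun x ⟨⟨hx₁, hx₂⟩, ⟨hx₃, hx₄⟩⟩ b => ⟨?_, ?_⟩
  · exact hx₁.snoc hx₂ hx₃ hx₄ b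
  · rw [not_snoc]
    exact hx₃.snoc hx₄ (by simpa only [Bool.not_not] using hx₁)
      (by simpa only [Bool.not_not] using hx₂) !b

section Band

variable {m q : ℕ} {x : Fin (2 * m) → Bool}

theorem Bad.avoidsWt_sub (hm : q ≤ m) (hx : Bad m q x) : AvoidsWt x (m - q) := by
  intro j hj h
  have := wt_flip_add_wt_flip_not x j
  exact hx.2 j hj (by omega)

theorem Bad.abs_wt_flip_sub_lt (hm : q ≤ m) (hx : Bad m q x) {j : ℕ} (hj : j ≤ 2 * m) :
    |(wt (Flip x j) : ℤ) - m| < q := by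
  have hends : wt (Flip x 0) + wt (Flip x (2 * m)) = 2 * m := by
    rw [flip_zero, flip_of_le x le_rfl]; exact wt_add_wt_not x
  refine abs_sub_lt_of_forall_ne (f := fun j => (wt (Flip x j) : ℤ)) (N := 2 * m)
    (abs_wt_flip_succ_sub_le x) q.cast_nonneg ?_ ?_ ?_ j hj
  · rw [Set.mem_uIcc]; omega
  · intro j hj h; exact hx.avoidsWt_sub hm j hj (by omega)
  · intro j hj h; exact hx.1 j hj (by omega)

theorem Bad.exists_true (hm : q ≤ m) (hx : Bad m q x) {s : ℕ} (hs : s + 2 * q ≤ 2 * m) :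
    ∃ i : Fin (2 * m), s ≤ i ∧ i < s + 2 * q ∧ x i = true := by
  by_contra! h
  have hrun := wt_flip_add_of_forall_false x hs fun i h₁ h₂ => by simpa using h i h₁ h₂
  have h₁ := hx.abs_wt_flip_sub_lt hm (j := s) (by omega)
  have h₂ := hx.abs_wt_flip_sub_lt hm hs
  rw [hrun] at h₂
  rw [abs_lt] at h₁ h₂
  push_cast at h₂
  omega

end Band

theorem card_le_of_forall_block_exists_true {N L K : ℕ} (hLK : L * K ≤ N)
    {P : (Fin N → Bool) → Prop}
    (hP : ∀ x, P x → ∀ k < K, ∃ i : Fin N, L * k ≤ i ∧ i < L * k + L ∧ x i = true) :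
    Nat.card {x // P x} ≤ (2 ^ L - 1) ^ K * 2 ^ (N - L * K) := by
  let e : Fin K × Fin L ⊕ Fin (N - L * K) ≃ Fin N :=
    (Equiv.sumCongr finProdFinEquiv (Equiv.refl _)).trans
      (finSumFinEquiv.trans (finCongr (by rw [mul_comm]; omega)))
  have he : ∀ k l, (e (.inl (k, l)) : ℕ) = l + L * k := fun k l => rfl
  let G : {x // P x} → (Fin K → {g : Fin L → Bool // g ≠ fun _ => false}) ×
      (Fin (N - L * K) → Bool) := fun x =>
    (fun k => ⟨fun l => x.1 (e (.inl (k, l))), by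
      obtain ⟨i, hi₁, hi₂, hxi⟩ := hP x.1 x.2 k k.isLt
      intro h
      have := congrFun h ⟨i - L * k, by omega⟩
      rw [show e (.inl (k, ⟨i - L * k, _⟩)) = i from
        Fin.ext (by rw [he, Fin.val_mk]; omega)] at this
      simp [hxi] at this⟩,
     fun t => x.1 (e (.inr t)))
  have hG : Function.Injective G := by
    rintro ⟨x, hx⟩ ⟨y, hy⟩ h
    simp only [G, Prod.mk.injEq, funext_iff, Subtype.mk.injEq] at h
    refine Subtype.ext (funext fun i => ?_)
    obtain ⟨a, rfl⟩ := e.surjective i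
    rcases a with ⟨k, l⟩ | t
    exacts [h.1 k l, h.2 t]
  refine (Nat.card_le_card_of_injective G hG).trans_eq ?_
  simp [Nat.card_eq_fintype_card, Fintype.card_subtype_compl]

theorem card_div_le_of_forall_block_exists_true {N L K : ℕ} (hLK : L * K ≤ N)
    {P : (Fin N → Bool) → Prop}
    (hP : ∀ x, P x → ∀ k < K, ∃ i : Fin N, L * k ≤ i ∧ i < L * k + L ∧ x i = true) :
    (Nat.card {x // P x} : ℝ) / 2 ^ N ≤ (1 - (2 ^ L)⁻¹) ^ K := by
  have hcard : (Nat.card {x // P x} : ℝ) ≤ ((2 ^ L - 1 : ℕ) : ℝ) ^ K * 2 ^ (N - L * K) := by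
    exact_mod_cast card_le_of_forall_block_exists_true hLK hP
  rw [Nat.cast_sub Nat.one_le_two_pow] at hcard
  push_cast at hcard
  have hN : (2 : ℝ) ^ N = (2 ^ L) ^ K * 2 ^ (N - L * K) := by
    rw [← pow_mul, ← pow_add]; congr 1; omega
  rw [div_le_iff₀ (by positivity), hN, ← mul_assoc, ← mul_pow, sub_mul, one_mul,
    inv_mul_cancel₀ (by positivity)]
  exact hcard

theorem D_div_le {m q : ℕ} (hm : q ≤ m) :
    (D m q : ℝ) / 2 ^ (2 * m) ≤ (1 - (2 ^ (2 * q))⁻¹) ^ (m / q) := by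
  have hq := Nat.mul_div_le m q
  refine card_div_le_of_forall_block_exists_true (by rw [mul_assoc]; omega) fun x hx k hk => ?_
  have : q * (k + 1) ≤ q * (m / q) := Nat.mul_le_mul_left q hk
  exact hx.exists_true hm (by linarith)

theorem DB_div_le {m q : ℕ} (hq : 1 ≤ q) (hm : q ≤ m) :
    (DB m q : ℝ) / 2 ^ (2 * m - 1) ≤ (1 - (2 ^ (2 * q))⁻¹) ^ (m / q) := by
  have h2m : (2 : ℝ) ^ (2 * m) = 2 * 2 ^ (2 * m - 1) := by
    rw [← pow_succ']; congr 1; omega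
  calc (DB m q : ℝ) / 2 ^ (2 * m - 1) = (2 * DB m q : ℕ) / 2 ^ (2 * m) := by
        rw [h2m]; push_cast; exact (mul_div_mul_left _ _ two_ne_zero).symm
    _ ≤ D m q / 2 ^ (2 * m) := by gcongr; exact two_mul_DB_le_D hq hm
    _ ≤ _ := D_div_le hm

/-- `2·D_B(n−1,q) ≤ D(n,q)`; in particular for fixed `q`,
`D_B(n−1,q)/2^{n−1} → 0` along even `n = 2m`. -/
theorem stmt14 (q : ℕ) (hq : 1 ≤ q) :
    (∀ m, q ≤ m → 2 * DB m q ≤ D m q) ∧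
    Filter.Tendsto (fun m : ℕ => (DB m q : ℝ) / 2^(2*m-1)) Filter.atTop (nhds 0) := by
  refine ⟨fun m hm => two_mul_DB_le_D hq hm, ?_⟩
  have hpos : (0 : ℝ) < (2 ^ (2 * q))⁻¹ := by positivity
  have hle : (2 ^ (2 * q) : ℝ)⁻¹ ≤ 1 := inv_le_one_of_one_le₀ (one_le_pow₀ one_le_two)
  have hdiv : Filter.Tendsto (fun m => m / q) Filter.atTop Filter.atTop :=
    Filter.tendsto_atTop_atTop.2 fun b => ⟨b * q, fun m hm => (Nat.le_div_iff_mul_le hq).2 hm⟩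
  refine squeeze_zero' (Filter.Eventually.of_forall fun m => by positivity)
    (Filter.eventually_atTop.2 ⟨q, fun m hm => DB_div_le hq hm⟩) ?_
  exact (tendsto_pow_atTop_nhds_zero_of_lt_one (by linarith) (by linarith)).comp hdiv
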